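/- arXiv:1602.04866 — 3 statements merged into one kernel-verified Lean document; each statement's English description precedes it below -/
import Mathlib

section
/- Let λ > 0 satisfy tan λ + 2·tan(λ/2) = 0 and λ ∉ (π/2)·ℤ. Define functions on [0,1]: u₃(x) = u₄(x) = sin(λx), u₅(x) = u₆(x) = −sin(λx), and u₇(x) = (sin λ / sin(λ/2))·sin(λ(x − 1/2)). Then these functions are not all identically zero, each satisfies u_m'' = −λ²·u_m on [0,1], and they satisfy: u₃(0) = u₄(0) = u₅(0) = u₆(0) = 0; u₃(1) = u₄(1) = u₇(1); u₅(1) = u₆(1) = u₇(0); u₃'(0) + u₆'(0) = 0; u₄'(0) + u₅'(0) = 0; u₃'(1) + u₄'(1) + u₇'(1) = 0; and u₅'(1) + u₆'(1) − u₇'(0) = 0. -/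
/-!
Each `uₘ` is a multiple of a shifted `sin (λ x)`, so `u'' = -λ² u` holds everywhere, and
continuity at the vertices reduces to `sin λ ≠ 0` and `sin (λ/2) ≠ 0`, which `λ ∉ (π/2)ℤ`
guarantees. The Kirchhoff conditions at `v₁, v₂` cancel termwise; at `v₃, v₄` they both
read `2 cos λ + (sin λ / sin (λ/2)) cos (λ/2) = 0`, which after clearing denominators is
the secular equation `tan λ + 2 tan (λ/2) = 0`.
-/

open Real

section SinShift

variable {u : ℝ → ℝ} {A a c : ℝ}

theorem deriv_eq_of_eq_mul_sin (hu : ∀ x, u x = A * sin (a * (x - c))) :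
    deriv u = fun x => A * (a * cos (a * (x - c))) := by
  funext x
  have hsin : HasDerivAt (fun y => sin (a * (y - c))) (a * cos (a * (x - c))) x := by
    simpa [mul_comm] using (((hasDerivAt_id x).sub_const c).const_mul a).sin
  rw [funext hu]
  exact (hsin.const_mul A).deriv

theorem deriv_deriv_eq_of_eq_mul_sin (hu : ∀ x, u x = A * sin (a * (x - c))) (x : ℝ) :
    deriv (deriv u) x = -a ^ 2 * u x := by
  have hcos : HasDerivAt (fun y => cos (a * (y - c))) (-(a * sin (a * (x - c)))) x := by
    simpa [mul_comm] using (((hasDerivAt_id x).sub_const c).const_mul a).cos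
  rw [deriv_eq_of_eq_mul_sin hu, ((hcos.const_mul a).const_mul A).deriv, hu]
  ring

end SinShift

section SecularEquation

variable {θ : ℝ}

theorem half_ne_int_mul_pi_div_two (h : ∀ n : ℤ, θ ≠ n * (π / 2)) (n : ℤ) :
    θ / 2 ≠ n * (π / 2) := by
  intro hn
  exact h (2 * n) (by push_cast; linarith)

theorem sin_ne_zero_of_ne_int_mul_pi_div_two (h : ∀ n : ℤ, θ ≠ n * (π / 2)) : sin θ ≠ 0 := by
  rw [sin_ne_zero_iff]
  intro n hn
  exact h (2 * n) (by push_cast; linarith)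

theorem cos_ne_zero_of_ne_int_mul_pi_div_two (h : ∀ n : ℤ, θ ≠ n * (π / 2)) : cos θ ≠ 0 := by
  rw [cos_ne_zero_iff]
  intro n hn
  exact h (2 * n + 1) (by push_cast; linarith)

theorem two_mul_cos_add_sin_div_sin_half_mul_cos_half (h : ∀ n : ℤ, θ ≠ n * (π / 2))
    (htan : tan θ + 2 * tan (θ / 2) = 0) :
    2 * cos θ + sin θ / sin (θ / 2) * cos (θ / 2) = 0 := by
  have hhalf := half_ne_int_mul_pi_div_two h
  have hcos := cos_ne_zero_of_ne_int_mul_pi_div_two h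
  have hcos₂ := cos_ne_zero_of_ne_int_mul_pi_div_two hhalf
  have hsin₂ := sin_ne_zero_of_ne_int_mul_pi_div_two hhalf
  rw [tan_eq_sin_div_cos, tan_eq_sin_div_cos] at htan
  field_simp at htan ⊢
  linarith

end SecularEquation

theorem stmt4_general (lam : ℝ)
    (htan : Real.tan lam + 2 * Real.tan (lam / 2) = 0)
    (hZ : ∀ n : ℤ, lam ≠ n * (Real.pi / 2))
    (u3 u4 u5 u6 u7 : ℝ → ℝ)
    (h3 : ∀ x : ℝ, u3 x = Real.sin (lam * x))
    (h4 : ∀ x : ℝ, u4 x = Real.sin (lam * x))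
    (h5 : ∀ x : ℝ, u5 x = -Real.sin (lam * x))
    (h6 : ∀ x : ℝ, u6 x = -Real.sin (lam * x))
    (h7 : ∀ x : ℝ, u7 x = Real.sin lam / Real.sin (lam / 2) * Real.sin (lam * (x - 1/2))) :
    (¬ ∀ x ∈ Set.Icc (0:ℝ) 1,
        u3 x = 0 ∧ u4 x = 0 ∧ u5 x = 0 ∧ u6 x = 0 ∧ u7 x = 0) ∧
    (∀ x ∈ Set.Icc (0:ℝ) 1, deriv (deriv u3) x = -lam ^ 2 * u3 x) ∧
    (∀ x ∈ Set.Icc (0:ℝ) 1, deriv (deriv u4) x = -lam ^ 2 * u4 x) ∧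
    (∀ x ∈ Set.Icc (0:ℝ) 1, deriv (deriv u5) x = -lam ^ 2 * u5 x) ∧
    (∀ x ∈ Set.Icc (0:ℝ) 1, deriv (deriv u6) x = -lam ^ 2 * u6 x) ∧
    (∀ x ∈ Set.Icc (0:ℝ) 1, deriv (deriv u7) x = -lam ^ 2 * u7 x) ∧
    u3 0 = 0 ∧ u4 0 = 0 ∧ u5 0 = 0 ∧ u6 0 = 0 ∧
    u3 1 = u4 1 ∧ u4 1 = u7 1 ∧
    u5 1 = u6 1 ∧ u6 1 = u7 0 ∧
    deriv u3 0 + deriv u6 0 = 0 ∧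
    deriv u4 0 + deriv u5 0 = 0 ∧
    deriv u3 1 + deriv u4 1 + deriv u7 1 = 0 ∧
    deriv u5 1 + deriv u6 1 - deriv u7 0 = 0 := by
  have hsin := sin_ne_zero_of_ne_int_mul_pi_div_two hZ
  have hsin₂ := sin_ne_zero_of_ne_int_mul_pi_div_two (half_ne_int_mul_pi_div_two hZ)
  have hsecular := two_mul_cos_add_sin_div_sin_half_mul_cos_half hZ htan
  have e3 : ∀ x, u3 x = 1 * sin (lam * (x - 0)) := by simp [h3]
  have e4 : ∀ x, u4 x = 1 * sin (lam * (x - 0)) := by simp [h4]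
  have e5 : ∀ x, u5 x = -1 * sin (lam * (x - 0)) := by simp [h5]
  have e6 : ∀ x, u6 x = -1 * sin (lam * (x - 0)) := by simp [h6]
  have at_one : lam * (1 - 1 / 2) = lam / 2 := by ring
  have at_zero : lam * (0 - 1 / 2) = -(lam / 2) := by ring
  refine ⟨fun H => hsin (by simpa [h3] using (H 1 ⟨zero_le_one, le_rfl⟩).1),
    fun x _ => deriv_deriv_eq_of_eq_mul_sin e3 x, fun x _ => deriv_deriv_eq_of_eq_mul_sin e4 x,
    fun x _ => deriv_deriv_eq_of_eq_mul_sin e5 x, fun x _ => deriv_deriv_eq_of_eq_mul_sin e6 x,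
    fun x _ => deriv_deriv_eq_of_eq_mul_sin h7 x, ?_⟩
  simp only [h3, h4, h5, h6, h7, deriv_eq_of_eq_mul_sin e3, deriv_eq_of_eq_mul_sin e4,
    deriv_eq_of_eq_mul_sin e5, deriv_eq_of_eq_mul_sin e6, deriv_eq_of_eq_mul_sin h7,
    at_one, at_zero, sub_zero, mul_one, sin_neg, cos_neg]
  refine ⟨by simp, by simp, by simp, by simp, trivial, ?_, trivial, ?_, by simp, by simp, ?_, ?_⟩
  · field_simp
  · field_simp
  · linear_combination lam * hsecular
  · linear_combination -lam * hsecular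

/-- The eigenfunction verification of Example 2 of the paper: for `λ` with
`tan λ + 2 tan(λ/2) = 0`, `λ ∉ (π/2)ℤ`, the explicit functions
`u₃ = u₄ = sin(λx)`, `u₅ = u₆ = −sin(λx)`, `u₇ = (sin λ / sin(λ/2)) sin(λ(x−1/2))`
are not all identically zero, satisfy `u'' = −λ²u` on `[0,1]`, are continuous at the
vertices and satisfy the Kirchhoff conditions there. -/
theorem stmt4 (lam : ℝ) (hlam : 0 < lam)
    (htan : Real.tan lam + 2 * Real.tan (lam / 2) = 0)
    (hZ : ∀ n : ℤ, lam ≠ n * (Real.pi / 2))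
    (u3 u4 u5 u6 u7 : ℝ → ℝ)
    (h3 : ∀ x : ℝ, u3 x = Real.sin (lam * x))
    (h4 : ∀ x : ℝ, u4 x = Real.sin (lam * x))
    (h5 : ∀ x : ℝ, u5 x = -Real.sin (lam * x))
    (h6 : ∀ x : ℝ, u6 x = -Real.sin (lam * x))
    (h7 : ∀ x : ℝ, u7 x = Real.sin lam / Real.sin (lam / 2) * Real.sin (lam * (x - 1/2))) :
    (¬ ∀ x ∈ Set.Icc (0:ℝ) 1,
        u3 x = 0 ∧ u4 x = 0 ∧ u5 x = 0 ∧ u6 x = 0 ∧ u7 x = 0) ∧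
    (∀ x ∈ Set.Icc (0:ℝ) 1, deriv (deriv u3) x = -lam ^ 2 * u3 x) ∧
    (∀ x ∈ Set.Icc (0:ℝ) 1, deriv (deriv u4) x = -lam ^ 2 * u4 x) ∧
    (∀ x ∈ Set.Icc (0:ℝ) 1, deriv (deriv u5) x = -lam ^ 2 * u5 x) ∧
    (∀ x ∈ Set.Icc (0:ℝ) 1, deriv (deriv u6) x = -lam ^ 2 * u6 x) ∧
    (∀ x ∈ Set.Icc (0:ℝ) 1, deriv (deriv u7) x = -lam ^ 2 * u7 x) ∧
    u3 0 = 0 ∧ u4 0 = 0 ∧ u5 0 = 0 ∧ u6 0 = 0 ∧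
    u3 1 = u4 1 ∧ u4 1 = u7 1 ∧
    u5 1 = u6 1 ∧ u6 1 = u7 0 ∧
    deriv u3 0 + deriv u6 0 = 0 ∧
    deriv u4 0 + deriv u5 0 = 0 ∧
    deriv u3 1 + deriv u4 1 + deriv u7 1 = 0 ∧
    deriv u5 1 + deriv u6 1 - deriv u7 0 = 0 :=
  stmt4_general lam htan hZ u3 u4 u5 u6 u7 h3 h4 h5 h6 h7
end

section
/- In the metric graph setup, let λ ∈ ℂ with Re λ > 0 and let v = (v_1, …, v_{K+M}) be an outgoing resonant state for λ with lead coefficients a_1, …, a_K, i.e. each v_m is C², v satisfies the Kirchhoff vertex conditions, −v_m'' = λ²·v_m on every edge, and v_k(x) = a_k·e^{iλx} on each lead e_k. Then Im(λ²) · Σ_{m=K+1}^{K+M} ∫₀^{ℓ_m} |v_m(x)|² dx = − Re λ · Σ_{k=1}^{K} |a_k|². In particular, if Im λ ≤ 0 then Σ_{k=1}^{K} |a_k|² = 2·|Im λ| · Σ_{m=K+1}^{K+M} ∫₀^{ℓ_m} |v_m|². -/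
open MeasureTheory
open scoped Classical

/-- A finite combinatorial graph with `K ≥ 1` infinite leads (each attached to a vertex
at `x = 0`) and `M` finite edges, each with two distinct endpoints. -/
structure QGraph where
  /-- vertex set -/
  V : Type
  fV : Fintype V
  /-- number of infinite leads -/
  K : ℕ
  /-- number of finite edges -/
  M : ℕ
  hK : 0 < K
  /-- the vertex to which lead `k` is attached (its `x = 0` end) -/
  leadV : Fin K → V
  /-- the `x = 0` endpoint of finite edge `m` -/
  ep0 : Fin M → V
  /-- the `x = ℓ_m` endpoint of finite edge `m` -/
  ep1 : Fin M → V
  ep_ne : ∀ m, ep0 m ≠ ep1 m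

attribute [instance] QGraph.fV

/-- A function on the metric graph: one function per lead and one per finite edge
(given as globally defined functions; only values on `[0,∞)` resp. `[0,ℓ_m]` matter). -/
structure GraphFun (G : QGraph) where
  lead : Fin G.K → ℝ → ℂ
  edge : Fin G.M → ℝ → ℂ

/-- All component functions are twice continuously differentiable. -/
def GraphFun.Smooth {G : QGraph} (u : GraphFun G) : Prop :=
  (∀ k, ContDiff ℝ 2 (u.lead k)) ∧ (∀ m, ContDiff ℝ 2 (u.edge m))

/-- Kirchhoff vertex conditions for edge lengths `ℓ`: continuity at each vertex
(a common vertex value) and vanishing of the sum of outward normal derivatives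
`∂_ν u_m(0) = −u_m'(0)`, `∂_ν u_m(ℓ_m) = u_m'(ℓ_m)` at each vertex. -/
def GraphFun.Kirchhoff {G : QGraph} (u : GraphFun G) (ℓ : Fin G.M → ℝ) : Prop :=
  (∃ val : G.V → ℂ,
    (∀ k, u.lead k 0 = val (G.leadV k)) ∧
    (∀ m, u.edge m 0 = val (G.ep0 m)) ∧
    (∀ m, u.edge m (ℓ m) = val (G.ep1 m))) ∧
  (∀ v : G.V,
    (∑ k ∈ Finset.univ.filter (fun k => G.leadV k = v), -(deriv (u.lead k) 0))
    + (∑ m ∈ Finset.univ.filter (fun m => G.ep0 m = v), -(deriv (u.edge m) 0))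
    + (∑ m ∈ Finset.univ.filter (fun m => G.ep1 m = v), deriv (u.edge m) (ℓ m)) = 0)

/-- The tuple does not vanish identically on the metric graph. -/
def GraphFun.Nontrivial {G : QGraph} (u : GraphFun G) (ℓ : Fin G.M → ℝ) : Prop :=
  (∃ k, ∃ x : ℝ, 0 ≤ x ∧ u.lead k x ≠ 0) ∨
  (∃ m, ∃ x ∈ Set.Icc (0:ℝ) (ℓ m), u.edge m x ≠ 0)

/-- `u` is an outgoing resonant state for `λ`: `C²`, Kirchhoff conditions,
`−u_m'' = λ² u_m` on every finite edge, and `u_k(x) = a_k e^{iλx}` on every lead. -/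
def IsResonantState (G : QGraph) (ℓ : Fin G.M → ℝ) (lam : ℂ) (u : GraphFun G) : Prop :=
  u.Smooth ∧ u.Kirchhoff ℓ ∧
  (∀ m, ∀ x ∈ Set.Icc (0:ℝ) (ℓ m), -(deriv (deriv (u.edge m)) x) = lam ^ 2 * u.edge m x) ∧
  (∃ a : Fin G.K → ℂ, ∀ k, ∀ x : ℝ, 0 ≤ x →
    u.lead k x = a k * Complex.exp (Complex.I * lam * (x : ℂ)))

/-- `λ` is a resonance of the Kirchhoff Laplacian: it admits a nonzero outgoing
resonant state. -/
def IsResonance (G : QGraph) (ℓ : Fin G.M → ℝ) (lam : ℂ) : Prop :=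
  ∃ u : GraphFun G, IsResonantState G ℓ lam u ∧ u.Nontrivial ℓ

/-- The squared `L²` norm of a tuple on the metric graph. -/
noncomputable def graphNormSq (G : QGraph) (ℓ : Fin G.M → ℝ) (u : GraphFun G) : ℝ :=
  (∑ k, ∫ x in Set.Ioi (0:ℝ), ‖u.lead k x‖ ^ 2) +
  ∑ m, ∫ x in (0:ℝ)..(ℓ m), ‖u.edge m x‖ ^ 2

/-- The squared `L²` norm of `(P − z)u = (−u_m'' − z·u_m)_m` on the metric graph. -/
noncomputable def graphDefectSq (G : QGraph) (ℓ : Fin G.M → ℝ) (z : ℂ) (u : GraphFun G) : ℝ :=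
  (∑ k, ∫ x in Set.Ioi (0:ℝ), ‖-(deriv (deriv (u.lead k)) x) - z * u.lead k x‖ ^ 2) +
  ∑ m, ∫ x in (0:ℝ)..(ℓ m), ‖-(deriv (deriv (u.edge m)) x) - z * u.edge m x‖ ^ 2

/-- `u` is supported in `[0, R]` on every infinite lead. -/
def LeadSupport (G : QGraph) (u : GraphFun G) (R : ℝ) : Prop :=
  ∀ k, ∀ x : ℝ, R < x → u.lead k x = 0


/-!
Multiply `-v_m'' = λ² v_m` by `conj v_m` and integrate by parts on each finite edge. Summed over
the edges, the boundary terms are the pairings of vertex values with outward normal derivatives;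
by the Kirchhoff conditions they cancel against the lead terms `conj (a_k) · (-v_k'(0))`, where
`v_k'(0) = iλ a_k`. This gives `λ² ‖v‖² = ‖v'‖² - iλ Σ |a_k|²` over the finite edges, whose
imaginary part is the identity; `Im λ² = 2 Re λ Im λ` and `Re λ > 0` give the corollary.
-/

open ComplexConjugate Finset

theorem intervalIntegral.integral_conj_mul_deriv_deriv {f : ℝ → ℂ} (hf : ContDiff ℝ 2 f)
    (a b : ℝ) :
    ∫ x in a..b, conj (f x) * deriv (deriv f) x
      = conj (f b) * deriv f b - conj (f a) * deriv f a
        - ((∫ x in a..b, ‖deriv f x‖ ^ 2 : ℝ) : ℂ) := by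
  have hf' : ContDiff ℝ 1 (deriv f) := hf.deriv'
  have hdf : Differentiable ℝ f := hf.differentiable (by norm_num)
  have hdf' : Differentiable ℝ (deriv f) := hf'.differentiable one_ne_zero
  rw [intervalIntegral.integral_mul_deriv_eq_deriv_mul (u := fun x => conj (f x))
    (u' := fun x => conj (deriv f x))
    (fun x _ => (hdf x).hasDerivAt.star) (fun x _ => (hdf' x).hasDerivAt)
    ((hf.continuous_deriv (by norm_num)).star.intervalIntegrable a b)
    ((hf'.continuous_deriv le_rfl).intervalIntegrable a b)]
  simp only [Complex.conj_mul', ← Complex.ofReal_pow, intervalIntegral.integral_ofReal]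

theorem intervalIntegral.mul_integral_norm_sq_eq_of_neg_deriv_deriv_eq {f : ℝ → ℂ}
    (hf : ContDiff ℝ 2 f) {L : ℝ} (hL : 0 ≤ L) {z : ℂ}
    (hode : ∀ x ∈ Set.Icc 0 L, -deriv (deriv f) x = z * f x) :
    z * ((∫ x in (0:ℝ)..L, ‖f x‖ ^ 2 : ℝ) : ℂ)
      = ((∫ x in (0:ℝ)..L, ‖deriv f x‖ ^ 2 : ℝ) : ℂ)
        - (conj (f L) * deriv f L + conj (f 0) * -deriv f 0) := by
  have hint : ∫ x in (0:ℝ)..L, conj (f x) * deriv (deriv f) x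
      = -(z * ((∫ x in (0:ℝ)..L, ‖f x‖ ^ 2 : ℝ) : ℂ)) := by
    rw [← intervalIntegral.integral_ofReal, ← intervalIntegral.integral_const_mul,
      ← intervalIntegral.integral_neg]
    refine intervalIntegral.integral_congr fun x hx => ?_
    rw [Set.uIcc_of_le hL] at hx
    rw [Complex.ofReal_pow, ← Complex.conj_mul', ← neg_neg (deriv (deriv f) x), hode x hx]
    ring
  linear_combination hint - intervalIntegral.integral_conj_mul_deriv_deriv hf 0 L

theorem deriv_eq_of_eqOn_Ici {F : Type*} [NormedAddCommGroup F] [NormedSpace ℝ F] {f g : ℝ → F}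
    {x : ℝ} (hf : DifferentiableAt ℝ f x) (hg : DifferentiableAt ℝ g x)
    (hfg : Set.EqOn f g (Set.Ici x)) : deriv f x = deriv g x := by
  have hx : UniqueDiffWithinAt ℝ (Set.Ici x) x := uniqueDiffOn_Ici x x Set.self_mem_Ici
  rw [← hf.derivWithin hx, ← hg.derivWithin hx, derivWithin_congr hfg (hfg Set.self_mem_Ici)]

theorem deriv_zero_of_eq_mul_cexp {f : ℝ → ℂ} (hf : DifferentiableAt ℝ f 0) {a lam : ℂ}
    (hlead : ∀ x : ℝ, 0 ≤ x → f x = a * Complex.exp (Complex.I * lam * x)) :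
    deriv f 0 = Complex.I * lam * a := by
  have hexp : HasDerivAt (fun x : ℝ => a * Complex.exp (Complex.I * lam * x))
      (a * (Complex.exp (Complex.I * lam * (0 : ℝ)) * (Complex.I * lam * 1))) 0 :=
    (((hasDerivAt_id (0 : ℝ)).ofReal_comp.const_mul (Complex.I * lam)).cexp).const_mul a
  rw [deriv_eq_of_eqOn_Ici hf hexp.differentiableAt hlead, hexp.deriv]
  simp only [Complex.ofReal_zero, mul_zero, Complex.exp_zero]
  ring

theorem Finset.sum_comp_mul_eq_sum_mul_sum_fiber {ι κ R : Type*} [Fintype ι] [Fintype κ]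
    [DecidableEq κ] [NonUnitalNonAssocSemiring R] (g : ι → κ) (w : κ → R) (c : ι → R) :
    ∑ i, w (g i) * c i = ∑ j, w j * ∑ i with g i = j, c i := by
  rw [← sum_fiberwise univ g]
  refine sum_congr rfl fun j _ => ?_
  rw [mul_sum]
  exact sum_congr rfl fun i hi => by rw [(mem_filter.1 hi).2]

theorem GraphFun.Kirchhoff.sum_conj_mul_normalDeriv_eq_zero {G : QGraph} {u : GraphFun G}
    {ℓ : Fin G.M → ℝ} (hu : u.Kirchhoff ℓ) :
    ∑ k, conj (u.lead k 0) * -deriv (u.lead k) 0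
      + ∑ m, (conj (u.edge m (ℓ m)) * deriv (u.edge m) (ℓ m)
        + conj (u.edge m 0) * -deriv (u.edge m) 0) = 0 := by
  obtain ⟨⟨val, hlead, hedge0, hedge1⟩, hflux⟩ := hu
  have hvertex : ∑ w, conj (val w) *
      ((∑ k with G.leadV k = w, -deriv (u.lead k) 0)
        + (∑ m with G.ep0 m = w, -deriv (u.edge m) 0)
        + ∑ m with G.ep1 m = w, deriv (u.edge m) (ℓ m)) = 0 :=
    sum_eq_zero fun w _ => by rw [hflux w, mul_zero]
  simp only [hlead, hedge0, hedge1, sum_add_distrib]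
  rw [sum_comp_mul_eq_sum_mul_sum_fiber G.leadV (fun w => conj (val w)),
    sum_comp_mul_eq_sum_mul_sum_fiber G.ep0 (fun w => conj (val w)),
    sum_comp_mul_eq_sum_mul_sum_fiber G.ep1 (fun w => conj (val w))]
  simp only [mul_add, sum_add_distrib] at hvertex
  linear_combination hvertex

theorem GraphFun.sq_mul_sum_integral_edge_norm_sq {G : QGraph} {ℓ : Fin G.M → ℝ}
    (hℓ : ∀ m, 0 < ℓ m) {lam : ℂ} {v : GraphFun G} {a : Fin G.K → ℂ}
    (hsm : v.Smooth) (hk : v.Kirchhoff ℓ)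
    (hode : ∀ m, ∀ x ∈ Set.Icc (0:ℝ) (ℓ m),
      -(deriv (deriv (v.edge m)) x) = lam ^ 2 * v.edge m x)
    (hlead : ∀ k, ∀ x : ℝ, 0 ≤ x →
      v.lead k x = a k * Complex.exp (Complex.I * lam * (x : ℂ))) :
    lam ^ 2 * ((∑ m, ∫ x in (0:ℝ)..(ℓ m), ‖v.edge m x‖ ^ 2 : ℝ) : ℂ)
      = ((∑ m, ∫ x in (0:ℝ)..(ℓ m), ‖deriv (v.edge m) x‖ ^ 2 : ℝ) : ℂ)
        - Complex.I * lam * ((∑ k, ‖a k‖ ^ 2 : ℝ) : ℂ) := by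
  have hlead0 (k : Fin G.K) : v.lead k 0 = a k := by simpa using hlead k 0 le_rfl
  have hlead_deriv (k : Fin G.K) : deriv (v.lead k) 0 = Complex.I * lam * a k :=
    deriv_zero_of_eq_mul_cexp ((hsm.1 k).differentiable (by norm_num) 0) (hlead k)
  have hflux := hk.sum_conj_mul_normalDeriv_eq_zero
  simp only [hlead0, hlead_deriv] at hflux
  have hlead_flux : ∑ k, conj (a k) * -(Complex.I * lam * a k)
      = -(Complex.I * lam * ∑ k, ((‖a k‖ ^ 2 : ℝ) : ℂ)) := by
    rw [mul_sum, ← sum_neg_distrib]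
    exact sum_congr rfl fun k _ => by rw [Complex.ofReal_pow, ← Complex.conj_mul']; ring
  have hedges (m : Fin G.M) := intervalIntegral.mul_integral_norm_sq_eq_of_neg_deriv_deriv_eq
    (hsm.2 m) (hℓ m).le (hode m)
  rw [Complex.ofReal_sum, Complex.ofReal_sum, Complex.ofReal_sum, mul_sum,
    sum_congr rfl fun m _ => hedges m, sum_sub_distrib]
  linear_combination hlead_flux - hflux

/-- Green's-formula identity for outgoing resonant states (from the proof of
Proposition 4.4 of the paper): if `Re λ > 0` and `v` is an outgoing resonant state
for `λ` with lead coefficients `a_k`, then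
`Im(λ²)·Σ_m ∫₀^{ℓ_m} |v_m|² = −Re λ · Σ_k |a_k|²`; in particular, if `Im λ ≤ 0`
then `Σ_k |a_k|² = 2|Im λ|·Σ_m ∫ |v_m|²`. -/
theorem stmt5 (G : QGraph) (ℓ : Fin G.M → ℝ) (hℓ : ∀ m, 0 < ℓ m)
    (lam : ℂ) (hre : 0 < lam.re)
    (v : GraphFun G) (a : Fin G.K → ℂ)
    (hsm : v.Smooth) (hk : v.Kirchhoff ℓ)
    (hode : ∀ m, ∀ x ∈ Set.Icc (0:ℝ) (ℓ m),
      -(deriv (deriv (v.edge m)) x) = lam ^ 2 * v.edge m x)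
    (hlead : ∀ k, ∀ x : ℝ, 0 ≤ x →
      v.lead k x = a k * Complex.exp (Complex.I * lam * (x : ℂ))) :
    (lam ^ 2).im * ∑ m, ∫ x in (0:ℝ)..(ℓ m), ‖v.edge m x‖ ^ 2
      = -lam.re * ∑ k, ‖a k‖ ^ 2 ∧
    (lam.im ≤ 0 →
      ∑ k, ‖a k‖ ^ 2
        = 2 * |lam.im| * ∑ m, ∫ x in (0:ℝ)..(ℓ m), ‖v.edge m x‖ ^ 2) := by
  have hgreen := congrArg Complex.im
    (GraphFun.sq_mul_sum_integral_edge_norm_sq hℓ hsm hk hode hlead)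
  simp only [Complex.mul_im, Complex.sub_im, Complex.ofReal_re, Complex.ofReal_im,
    Complex.mul_re, Complex.I_re, Complex.I_im, mul_zero, zero_mul, one_mul, zero_add,
    zero_sub] at hgreen
  refine ⟨by linarith, fun him => ?_⟩
  have hsq : (lam ^ 2).im = 2 * lam.re * lam.im := by rw [sq, Complex.mul_im]; ring
  have hcancel : lam.re * (∑ k, ‖a k‖ ^ 2
      - 2 * -lam.im * ∑ m, ∫ x in (0:ℝ)..(ℓ m), ‖v.edge m x‖ ^ 2) = 0 := by
    linear_combination hgreen - (∑ m, ∫ x in (0:ℝ)..(ℓ m), ‖v.edge m x‖ ^ 2) * hsq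
  rw [abs_of_nonpos him]
  linarith [(mul_eq_zero.1 hcancel).resolve_left hre.ne']
end

section
/- In the metric graph setup, fix the combinatorial graph, let the finite edge lengths be ℓ_m(t) with ℓ_m ∈ C¹(ℝ) and ℓ_m(0) > 0, let R > 0, and suppose λ₀ > 0 and λ₀² is an eigenvalue of P(0) with normalized eigenfunction u⁰ (a tuple with ‖u⁰‖ = 1, vanishing identically on every infinite lead, satisfying the Kirchhoff vertex conditions for the lengths ℓ_m(0) and −(u⁰_m)'' = λ₀²·u⁰_m on every edge). Then there exist constants C > 0 and t₀ > 0 such that for every t with |t| ≤ t₀ there exists a tuple u(t) of C² functions, supported in [0,R] on each infinite lead, satisfying the Kirchhoff vertex conditions for the lengths ℓ_m(t), with ‖u(t)‖ ≥ 1/2 and (Σ_m ∫ |−u(t)_m'' − λ₀²·u(t)_m|²)^{1/2} ≤ C·|t|. -/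
/-!
On a finite edge of length `L` put `stretch x = x - δ χ(x)`, with `δ = ℓ(t) - L` and `χ` a smooth
cutoff vanishing on `[0, L/3]` and equal to `1` on `[2L/3, ∞)`: it is the identity near `0` and the
translation by `-δ` near `L + δ`, so `w ∘ stretch` has on `[0, ℓ(t)]` the boundary values and
derivatives of `w` on `[0, L]`, and the quasimode (zero on the leads) inherits the Kirchhoff
conditions from `u⁰`. Since `-w'' = λ₀² w`, its defect is `δ` times a function jointly continuous
in `(δ, x)`, hence has `L²` norm `O(|δ|) = O(|t|)` because `ℓ` is differentiable at `0`. The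
`L²` norm of the quasimode is continuous in `t` and equals `1` at `t = 0`.
-/

open MeasureTheory
open scoped Classical

open Set Filter Topology Asymptotics

lemma deriv_comp_eq_ofReal_mul {w : ℝ → ℂ} {φ : ℝ → ℝ} (hw : Differentiable ℝ w)
    (hφ : Differentiable ℝ φ) :
    deriv (w ∘ φ) = fun x => ((deriv φ x : ℝ) : ℂ) * deriv w (φ x) := by
  ext x
  rw [deriv.scomp x (hw _) (hφ x), Complex.real_smul]

lemma deriv_deriv_comp {w : ℝ → ℂ} {φ : ℝ → ℝ} (hw : ContDiff ℝ 2 w) (hφ : ContDiff ℝ 2 φ)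
    (x : ℝ) :
    deriv (deriv (w ∘ φ)) x =
      ((deriv (deriv φ) x : ℝ) : ℂ) * deriv w (φ x)
        + ((deriv φ x : ℝ) : ℂ) ^ 2 * deriv (deriv w) (φ x) := by
  have hw' : Differentiable ℝ (deriv w) := (hw.deriv' (n := 1)).differentiable one_ne_zero
  have hφ' : Differentiable ℝ (deriv φ) := (hφ.deriv' (n := 1)).differentiable one_ne_zero
  rw [deriv_comp_eq_ofReal_mul (hw.differentiable two_ne_zero) (hφ.differentiable two_ne_zero)]
  have h : HasDerivAt (fun y => ((deriv φ y : ℝ) : ℂ) * deriv w (φ y))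
      (((deriv (deriv φ) x : ℝ) : ℂ) * deriv w (φ x)
        + ((deriv φ x : ℝ) : ℂ) * (deriv φ x • deriv (deriv w) (φ x))) x :=
    (hφ' x).hasDerivAt.ofReal_comp.mul
      ((hw' (φ x)).hasDerivAt.scomp x ((hφ.differentiable two_ne_zero) x).hasDerivAt)
  rw [h.deriv, Complex.real_smul]
  ring

lemma deriv_eq_zero_of_eqOn_Ici {E : Type*} [NormedAddCommGroup E] [NormedSpace ℝ E]
    {f : ℝ → E} {a : ℝ} (h : EqOn f 0 (Ici a)) : deriv f a = 0 := by
  by_cases hf : DifferentiableAt ℝ f a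
  · rw [← hf.derivWithin (uniqueDiffWithinAt_Ici a), derivWithin_congr h (h self_mem_Ici)]
    simp
  · exact deriv_zero_of_not_differentiableAt hf

lemma exists_forall_abs_le_of_eventually_nhds_zero {p : ℝ → Prop} (h : ∀ᶠ t in 𝓝 0, p t) :
    ∃ t₀ : ℝ, 0 < t₀ ∧ ∀ t : ℝ, |t| ≤ t₀ → p t := by
  obtain ⟨t₀, ht₀, hp⟩ := Metric.nhds_basis_closedBall.eventually_iff.1 h
  exact ⟨t₀, ht₀, fun t ht => hp (by rwa [Metric.mem_closedBall, dist_zero_right])⟩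

lemma exists_pos_eventually_sqrt_le_of_isBigO_sq {l : Filter ℝ} {f : ℝ → ℝ}
    (hf : f =O[l] fun t => t ^ 2) : ∃ C : ℝ, 0 < C ∧ ∀ᶠ t in l, √(f t) ≤ C * |t| := by
  obtain ⟨c, hc, hfc⟩ := hf.exists_pos
  refine ⟨√c, Real.sqrt_pos.2 hc, ?_⟩
  filter_upwards [hfc.bound] with t ht
  rw [← Real.sqrt_sq_eq_abs, ← Real.sqrt_mul hc.le]
  refine Real.sqrt_le_sqrt (le_trans (le_abs_self _) ?_)
  simpa using ht

noncomputable def cutoff (a x : ℝ) : ℝ := Real.smoothTransition ((x - a) / a)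

noncomputable def stretch (a δ x : ℝ) : ℝ := x - δ * cutoff a x

section Cutoff

variable {a x : ℝ}

lemma contDiff_cutoff {n : ℕ∞} (a : ℝ) : ContDiff ℝ n (cutoff a) :=
  Real.smoothTransition.contDiff.comp ((contDiff_id.sub contDiff_const).div_const a)

lemma cutoff_of_le (ha : 0 < a) (hx : x ≤ a) : cutoff a x = 0 :=
  Real.smoothTransition.zero_of_nonpos (div_nonpos_of_nonpos_of_nonneg (by linarith) ha.le)

lemma cutoff_of_two_mul_le (ha : 0 < a) (hx : 2 * a ≤ x) : cutoff a x = 1 :=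
  Real.smoothTransition.one_of_one_le (by rw [le_div_iff₀ ha]; linarith)

lemma deriv_cutoff_of_lt (ha : 0 < a) (hx : x < a) : deriv (cutoff a) x = 0 := by
  have : cutoff a =ᶠ[𝓝 x] fun _ => 0 :=
    eventually_of_mem (Iio_mem_nhds hx) fun y hy => cutoff_of_le ha hy.le
  simp [this.deriv_eq]

lemma deriv_cutoff_of_two_mul_lt (ha : 0 < a) (hx : 2 * a < x) : deriv (cutoff a) x = 0 := by
  have : cutoff a =ᶠ[𝓝 x] fun _ => 1 :=
    eventually_of_mem (Ioi_mem_nhds hx) fun y hy => cutoff_of_two_mul_le ha hy.le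
  simp [this.deriv_eq]

end Cutoff

section Stretch

variable {a δ x L s : ℝ}

@[simp] lemma stretch_zero (a : ℝ) : stretch a 0 = id := by
  ext x
  simp [stretch]

lemma stretch_apply_zero (ha : 0 < a) : stretch a δ 0 = 0 := by
  simp [stretch, cutoff_of_le ha ha.le]

lemma stretch_of_two_mul_le (ha : 0 < a) (hx : 2 * a ≤ x) : stretch a δ x = x - δ := by
  simp [stretch, cutoff_of_two_mul_le ha hx]

lemma continuous_stretch (a : ℝ) : Continuous fun p : ℝ × ℝ => stretch a p.1 p.2 := by
  have := (contDiff_cutoff (n := 0) a).continuous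
  unfold stretch
  fun_prop

lemma contDiff_stretch {n : ℕ∞} (a δ : ℝ) : ContDiff ℝ n (stretch a δ) :=
  contDiff_id.sub (contDiff_const.mul (contDiff_cutoff a))

lemma deriv_stretch (a δ : ℝ) :
    deriv (stretch a δ) = fun x => 1 - δ * deriv (cutoff a) x := by
  ext x
  exact ((hasDerivAt_id x).sub
    ((((contDiff_cutoff (n := 1) a).differentiable one_ne_zero) x).hasDerivAt.const_mul δ)).deriv

lemma deriv_deriv_stretch (a δ : ℝ) :
    deriv (deriv (stretch a δ)) = fun x => -(δ * deriv (deriv (cutoff a)) x) := by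
  ext x
  have hχ' : Differentiable ℝ (deriv (cutoff a)) :=
    ((contDiff_cutoff (n := 2) a).deriv' (n := 1)).differentiable one_ne_zero
  rw [deriv_stretch]
  exact (((hχ' x).hasDerivAt.const_mul δ).const_sub 1).deriv

lemma stretch_mem_Icc (ha : 0 < a) (hL : 3 * a ≤ L) (hs : |s - L| ≤ a) (hx : x ∈ Icc 0 s) :
    stretch a (s - L) x ∈ Icc 0 L := by
  have hχ : 0 ≤ cutoff a x ∧ cutoff a x ≤ 1 :=
    ⟨Real.smoothTransition.nonneg _, Real.smoothTransition.le_one _⟩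
  have hmove : |stretch a (s - L) x - x| ≤ |s - L| := by
    rw [stretch, sub_sub_cancel_left, abs_neg, abs_mul, abs_of_nonneg hχ.1]
    exact mul_le_of_le_one_right (abs_nonneg _) hχ.2
  have := abs_le.1 hmove
  have := abs_le.1 hs
  constructor
  · rcases le_or_gt x a with hxa | hxa
    · rw [stretch, cutoff_of_le ha hxa]
      linarith [hx.1]
    · linarith
  · rcases le_or_gt (2 * a) x with hxa | hxa
    · rw [stretch_of_two_mul_le ha hxa]
      linarith [hx.2]
    · linarith

end Stretch

/-- Where `-w'' = z w`, the defect `-(w ∘ stretch a δ)'' - z (w ∘ stretch a δ)` is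
`δ • stretchDefect a w z δ` (`defect_comp_stretch`). -/
noncomputable def stretchDefect (a : ℝ) (w : ℝ → ℂ) (z : ℂ) (δ x : ℝ) : ℂ :=
  ((deriv (deriv (cutoff a)) x : ℝ) : ℂ) * deriv w (stretch a δ x)
    + ((deriv (cutoff a) x * (δ * deriv (cutoff a) x - 2) : ℝ) : ℂ) * (z * w (stretch a δ x))

section StretchedFunction

variable {a δ x L s : ℝ} {w : ℝ → ℂ} {z : ℂ}

lemma comp_stretch_apply_zero (ha : 0 < a) : (w ∘ stretch a δ) 0 = w 0 := by
  simp [stretch_apply_zero ha]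

lemma deriv_comp_stretch_apply_zero (ha : 0 < a) (hw : Differentiable ℝ w) :
    deriv (w ∘ stretch a δ) 0 = deriv w 0 := by
  simp [deriv_comp_eq_ofReal_mul hw ((contDiff_stretch (n := 1) a δ).differentiable one_ne_zero),
    deriv_stretch, deriv_cutoff_of_lt ha ha, stretch_apply_zero ha]

lemma comp_stretch_of_two_mul_le (ha : 0 < a) (hs : 2 * a ≤ s) :
    (w ∘ stretch a (s - L)) s = w L := by
  simp [stretch_of_two_mul_le ha hs]

lemma deriv_comp_stretch_of_two_mul_lt (ha : 0 < a) (hw : Differentiable ℝ w) (hs : 2 * a < s) :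
    deriv (w ∘ stretch a (s - L)) s = deriv w L := by
  simp [deriv_comp_eq_ofReal_mul hw ((contDiff_stretch (n := 1) a _).differentiable one_ne_zero),
    deriv_stretch, deriv_cutoff_of_two_mul_lt ha hs, stretch_of_two_mul_le ha hs.le]

lemma defect_comp_stretch (hw : ContDiff ℝ 2 w)
    (hode : -(deriv (deriv w) (stretch a δ x)) = z * w (stretch a δ x)) :
    -(deriv (deriv (w ∘ stretch a δ)) x) - z * (w ∘ stretch a δ) x
      = δ * stretchDefect a w z δ x := by
  rw [deriv_deriv_comp hw (contDiff_stretch a δ), deriv_deriv_stretch, deriv_stretch,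
    stretchDefect, Function.comp_apply]
  push_cast
  linear_combination (1 - (δ : ℂ) * ((deriv (cutoff a) x : ℝ) : ℂ)) ^ 2 * hode

lemma continuous_stretchDefect (a : ℝ) (hw : ContDiff ℝ 2 w) (z : ℂ) :
    Continuous fun p : ℝ × ℝ => stretchDefect a w z p.1 p.2 := by
  have := continuous_stretch a
  have := hw.continuous
  have := hw.continuous_deriv one_le_two
  have := (contDiff_cutoff (n := 1) a).continuous_deriv le_rfl
  have := ((contDiff_cutoff (n := 2) a).deriv' (n := 1)).continuous_deriv le_rfl
  unfold stretchDefect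
  fun_prop

lemma integral_norm_sq_defect_comp_stretch (ha : 0 < a) (hL : 3 * a ≤ L) (hs : |s - L| ≤ a)
    (hw : ContDiff ℝ 2 w) (hode : ∀ y ∈ Icc 0 L, -(deriv (deriv w) y) = z * w y) :
    ∫ x in 0..s,
        ‖-(deriv (deriv (w ∘ stretch a (s - L))) x) - z * (w ∘ stretch a (s - L)) x‖ ^ 2
      = (s - L) ^ 2 * ∫ x in 0..s, ‖stretchDefect a w z (s - L) x‖ ^ 2 := by
  have hs0 : 0 ≤ s := by linarith [(abs_le.1 hs).1]
  rw [← intervalIntegral.integral_const_mul]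
  refine intervalIntegral.integral_congr fun x hx => ?_
  rw [uIcc_of_le hs0] at hx
  rw [defect_comp_stretch hw (hode _ (stretch_mem_Icc ha hL hs hx)), norm_mul, mul_pow,
    Complex.norm_real, Real.norm_eq_abs, sq_abs]

end StretchedFunction

lemma GraphFun.Kirchhoff.of_boundary_eq {G : QGraph} {u u' : GraphFun G} {ℓ ℓ' : Fin G.M → ℝ}
    (hu : u.Kirchhoff ℓ) (hlead : ∀ k, u'.lead k 0 = u.lead k 0)
    (hlead' : ∀ k, deriv (u'.lead k) 0 = deriv (u.lead k) 0)
    (h0 : ∀ m, u'.edge m 0 = u.edge m 0) (h0' : ∀ m, deriv (u'.edge m) 0 = deriv (u.edge m) 0)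
    (h1 : ∀ m, u'.edge m (ℓ' m) = u.edge m (ℓ m))
    (h1' : ∀ m, deriv (u'.edge m) (ℓ' m) = deriv (u.edge m) (ℓ m)) :
    u'.Kirchhoff ℓ' := by
  obtain ⟨⟨val, hl, he0, he1⟩, hsum⟩ := hu
  refine ⟨⟨val, fun k => (hlead k).trans (hl k), fun m => (h0 m).trans (he0 m),
    fun m => (h1 m).trans (he1 m)⟩, fun v => ?_⟩
  simpa only [hlead', h0', h1'] using hsum v

section LeadsVanish

variable {G : QGraph} {ℓ : Fin G.M → ℝ} {u : GraphFun G}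

lemma graphNormSq_eq_sum_edge (h : ∀ k, ∀ x : ℝ, 0 < x → u.lead k x = 0) :
    graphNormSq G ℓ u = ∑ m, ∫ x in (0:ℝ)..(ℓ m), ‖u.edge m x‖ ^ 2 := by
  rw [graphNormSq, add_eq_right]
  refine Finset.sum_eq_zero fun k _ => ?_
  rw [setIntegral_congr_fun measurableSet_Ioi (g := 0) fun x hx => by simp [h k x hx]]
  simp

lemma graphDefectSq_eq_sum_edge (z : ℂ) (h : ∀ k, ∀ x : ℝ, 0 < x → u.lead k x = 0) :
    graphDefectSq G ℓ z u =
      ∑ m, ∫ x in (0:ℝ)..(ℓ m), ‖-(deriv (deriv (u.edge m)) x) - z * u.edge m x‖ ^ 2 := by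
  rw [graphDefectSq, add_eq_right]
  refine Finset.sum_eq_zero fun k _ => ?_
  have hlead : ∀ x : ℝ, 0 < x → u.lead k =ᶠ[𝓝 x] 0 := fun x hx =>
    eventually_of_mem (Ioi_mem_nhds hx) fun y hy => h k y hy
  rw [setIntegral_congr_fun measurableSet_Ioi (g := 0) fun x hx => by
    simp [h k x hx, (hlead x hx).deriv.deriv_eq]]
  simp

end LeadsVanish

noncomputable def quasimode (G : QGraph) (ℓ : Fin G.M → ℝ → ℝ) (u0 : GraphFun G) (t : ℝ) :
    GraphFun G where
  lead := 0
  edge m := u0.edge m ∘ stretch (ℓ m 0 / 3) (ℓ m t - ℓ m 0)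

section Quasimode

variable {G : QGraph} {ℓ : Fin G.M → ℝ → ℝ} {u0 : GraphFun G}

lemma quasimode_smooth (hsm : ∀ m, ContDiff ℝ 2 (u0.edge m)) (t : ℝ) :
    (quasimode G ℓ u0 t).Smooth :=
  ⟨fun _ => contDiff_const, fun m => (hsm m).comp (contDiff_stretch _ _)⟩

lemma leadSupport_quasimode (R t : ℝ) : LeadSupport G (quasimode G ℓ u0 t) R :=
  fun _ _ _ => rfl

lemma eventually_abs_sub_lt_third (hℓ : ∀ m, Continuous (ℓ m)) (hℓ0 : ∀ m, 0 < ℓ m 0) :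
    ∀ᶠ t in 𝓝 0, ∀ m, |ℓ m t - ℓ m 0| < ℓ m 0 / 3 :=
  eventually_all.2 fun m => ((hℓ m).sub continuous_const).abs.continuousAt.eventually_lt
    continuousAt_const (by simpa using hℓ0 m)

lemma quasimode_kirchhoff (hℓ0 : ∀ m, 0 < ℓ m 0) (hsm : ∀ m, ContDiff ℝ 2 (u0.edge m))
    (hk : u0.Kirchhoff fun m => ℓ m 0) (hlead : ∀ k, ∀ x : ℝ, 0 ≤ x → u0.lead k x = 0)
    {t : ℝ} (ht : ∀ m, |ℓ m t - ℓ m 0| < ℓ m 0 / 3) :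
    (quasimode G ℓ u0 t).Kirchhoff fun m => ℓ m t := by
  have ha : ∀ m, 0 < ℓ m 0 / 3 := fun m => by linarith [hℓ0 m]
  have hend : ∀ m, 2 * (ℓ m 0 / 3) < ℓ m t := fun m => by linarith [(abs_lt.1 (ht m)).1]
  have hw : ∀ m, Differentiable ℝ (u0.edge m) := fun m => (hsm m).differentiable two_ne_zero
  refine hk.of_boundary_eq (fun k => (hlead k 0 le_rfl).symm)
    (fun k => by rw [deriv_eq_zero_of_eqOn_Ici fun x hx => hlead k x hx]; simp [quasimode])
    (fun m => comp_stretch_apply_zero (ha m)) (fun m => deriv_comp_stretch_apply_zero (ha m) (hw m))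
    (fun m => comp_stretch_of_two_mul_le (ha m) (hend m).le)
    (fun m => deriv_comp_stretch_of_two_mul_lt (ha m) (hw m) (hend m))

lemma tendsto_graphNormSq_quasimode (hℓ : ∀ m, Continuous (ℓ m))
    (hw : ∀ m, Continuous (u0.edge m)) (hlead : ∀ k, ∀ x : ℝ, 0 ≤ x → u0.lead k x = 0) :
    Tendsto (fun t => graphNormSq G (fun m => ℓ m t) (quasimode G ℓ u0 t)) (𝓝 0)
      (𝓝 (graphNormSq G (fun m => ℓ m 0) u0)) := by
  have hcont : Continuous fun t =>
      ∑ m, ∫ x in (0:ℝ)..(ℓ m t), ‖u0.edge m (stretch (ℓ m 0 / 3) (ℓ m t - ℓ m 0) x)‖ ^ 2 := by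
    refine continuous_finsetSum _ fun m _ =>
      intervalIntegral.continuous_parametric_intervalIntegral_of_continuous ?_ (hℓ m)
    have := continuous_stretch (ℓ m 0 / 3)
    have := hℓ m
    have := hw m
    fun_prop
  simp only [graphNormSq_eq_sum_edge fun k x hx => hlead k x hx.le,
    graphNormSq_eq_sum_edge (u := quasimode G ℓ u0 _) fun _ _ _ => rfl]
  simpa [quasimode] using hcont.tendsto 0

lemma graphDefectSq_quasimode_isBigO (hℓ : ∀ m, ContDiff ℝ 1 (ℓ m)) (hℓ0 : ∀ m, 0 < ℓ m 0)
    (hsm : ∀ m, ContDiff ℝ 2 (u0.edge m)) {z : ℂ}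
    (hode : ∀ m, ∀ x ∈ Icc (0:ℝ) (ℓ m 0), -(deriv (deriv (u0.edge m)) x) = z * u0.edge m x) :
    (fun t => graphDefectSq G (fun m => ℓ m t) z (quasimode G ℓ u0 t)) =O[𝓝 0]
      fun t => t ^ 2 := by
  set H : Fin G.M → ℝ → ℝ := fun m t =>
    ∫ x in (0:ℝ)..(ℓ m t), ‖stretchDefect (ℓ m 0 / 3) (u0.edge m) z (ℓ m t - ℓ m 0) x‖ ^ 2
  have hH : ∀ m, Continuous (H m) := fun m => by
    refine intervalIntegral.continuous_parametric_intervalIntegral_of_continuous ?_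
      (hℓ m).continuous
    have := continuous_stretchDefect (ℓ m 0 / 3) (hsm m) z
    have := (hℓ m).continuous
    fun_prop
  have hδ : ∀ m, (fun t => ℓ m t - ℓ m 0) =O[𝓝 0] fun t => t := fun m => by
    simpa using ((hℓ m).differentiable one_ne_zero 0).hasDerivAt.isBigO_sub
  have hdefect : (fun t => graphDefectSq G (fun m => ℓ m t) z (quasimode G ℓ u0 t)) =ᶠ[𝓝 0]
      fun t => ∑ m, (ℓ m t - ℓ m 0) ^ 2 * H m t := by
    filter_upwards [eventually_abs_sub_lt_third (fun m => (hℓ m).continuous) hℓ0] with t ht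
    rw [graphDefectSq_eq_sum_edge z fun _ _ _ => rfl]
    exact Finset.sum_congr rfl fun m _ => integral_norm_sq_defect_comp_stretch
      (by linarith [hℓ0 m]) (by linarith) (ht m).le (hsm m) (hode m)
  refine hdefect.trans_isBigO (IsBigO.fun_sum fun m _ => ?_)
  simpa using ((hδ m).pow 2).mul ((hH m).continuousAt.tendsto.isBigO_one ℝ)

end Quasimode

theorem stmt9_general (G : QGraph) (ℓ : Fin G.M → ℝ → ℝ)
    (hℓC1 : ∀ m, ContDiff ℝ 1 (ℓ m)) (hℓ0 : ∀ m, 0 < ℓ m 0)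
    (R : ℝ) (lam0 : ℝ)
    (u0 : GraphFun G)
    (hsm : u0.Smooth) (hk : u0.Kirchhoff (fun m => ℓ m 0))
    (hode : ∀ m, ∀ x ∈ Set.Icc (0:ℝ) (ℓ m 0),
      -(deriv (deriv (u0.edge m)) x) = ((lam0 : ℂ)) ^ 2 * u0.edge m x)
    (hlead : ∀ k, ∀ x : ℝ, 0 ≤ x → u0.lead k x = 0)
    (hnorm : graphNormSq G (fun m => ℓ m 0) u0 = 1) :
    ∃ C : ℝ, 0 < C ∧ ∃ t₀ : ℝ, 0 < t₀ ∧
      ∀ t : ℝ, |t| ≤ t₀ →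
        ∃ u : GraphFun G,
          u.Smooth ∧ u.Kirchhoff (fun m => ℓ m t) ∧ LeadSupport G u R ∧
          (1 / 2 : ℝ) ≤ Real.sqrt (graphNormSq G (fun m => ℓ m t) u) ∧
          Real.sqrt (graphDefectSq G (fun m => ℓ m t) ((lam0 : ℂ) ^ 2) u) ≤ C * |t| := by
  have hℓ : ∀ m, Continuous (ℓ m) := fun m => (hℓC1 m).continuous
  have hmass : ∀ᶠ t in 𝓝 0,
      (1 / 2 : ℝ) ≤ √(graphNormSq G (fun m => ℓ m t) (quasimode G ℓ u0 t)) := by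
    have h := tendsto_graphNormSq_quasimode hℓ (fun m => (hsm.2 m).continuous) hlead
    rw [hnorm] at h
    filter_upwards [h.eventually_const_lt (by norm_num : (1 / 2 : ℝ) ^ 2 < 1)] with t ht
    exact (Real.le_sqrt' (by norm_num)).2 ht.le
  obtain ⟨C, hC, hdefect⟩ := exists_pos_eventually_sqrt_le_of_isBigO_sq
    (graphDefectSq_quasimode_isBigO hℓC1 hℓ0 hsm.2 hode)
  obtain ⟨t₀, ht₀, h⟩ := exists_forall_abs_le_of_eventually_nhds_zero
    ((eventually_abs_sub_lt_third hℓ hℓ0).and (hmass.and hdefect))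
  refine ⟨C, hC, t₀, ht₀, fun t ht => ?_⟩
  obtain ⟨hclose, hmass_t, hdefect_t⟩ := h t ht
  exact ⟨quasimode G ℓ u0 t, quasimode_smooth hsm.2 t,
    quasimode_kirchhoff hℓ0 hsm.2 hk hlead hclose, leadSupport_quasimode R t, hmass_t, hdefect_t⟩

/-- The quasimode construction of the Example after Theorem 2 of the paper: given a
normalized eigenfunction `u⁰` of `P(0)` with eigenvalue `λ₀² > 0` (vanishing on all
leads) and `C¹` length families `ℓ_m(t)` with `ℓ_m(0) > 0`, there are `C, t₀ > 0` such
that for `|t| ≤ t₀` there is a tuple `u(t)`, `C²`, supported in `[0,R]` on each lead,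
satisfying the Kirchhoff conditions for the lengths `ℓ_m(t)`, with `‖u(t)‖ ≥ 1/2` and
`‖(P(t) − λ₀²)u(t)‖ ≤ C|t|`. -/
theorem stmt9 (G : QGraph) (ℓ : Fin G.M → ℝ → ℝ)
    (hℓC1 : ∀ m, ContDiff ℝ 1 (ℓ m)) (hℓ0 : ∀ m, 0 < ℓ m 0)
    (R : ℝ) (hR : 0 < R) (lam0 : ℝ) (hlam0 : 0 < lam0)
    (u0 : GraphFun G)
    (hsm : u0.Smooth) (hk : u0.Kirchhoff (fun m => ℓ m 0))
    (hode : ∀ m, ∀ x ∈ Set.Icc (0:ℝ) (ℓ m 0),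
      -(deriv (deriv (u0.edge m)) x) = ((lam0 : ℂ)) ^ 2 * u0.edge m x)
    (hlead : ∀ k, ∀ x : ℝ, 0 ≤ x → u0.lead k x = 0)
    (hnorm : graphNormSq G (fun m => ℓ m 0) u0 = 1) :
    ∃ C : ℝ, 0 < C ∧ ∃ t₀ : ℝ, 0 < t₀ ∧
      ∀ t : ℝ, |t| ≤ t₀ →
        ∃ u : GraphFun G,
          u.Smooth ∧ u.Kirchhoff (fun m => ℓ m t) ∧ LeadSupport G u R ∧
          (1 / 2 : ℝ) ≤ Real.sqrt (graphNormSq G (fun m => ℓ m t) u) ∧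
          Real.sqrt (graphDefectSq G (fun m => ℓ m t) ((lam0 : ℂ) ^ 2) u) ≤ C * |t| :=
  stmt9_general G ℓ hℓC1 hℓ0 R lam0 u0 hsm hk hode hlead hnorm
end
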